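/- arXiv:2109.06170 — 3 statements merged into one kernel-verified Lean document; each statement's English description precedes it below -/
import Mathlib

section
/- Let m ≥ d+1, τ > 0, R > 0. Then as ε → 0⁺, ∫_{B'_R ⊂ ℝ^{d−1}} |x'|² dx' / (ε + τ|x'|^m) = (d−1) M₂ ρ₂(ε) (1 + o(1)), where M₂ = ω_{d−1} Γ[(d+1)/m] / (m τ^{(d+1)/m}) with Γ[(d+1)/m] = Γ(1 − (d+1)/m)Γ((d+1)/m) if m > d+1 and Γ[(d+1)/m] = 1 if m = d+1, and ρ₂(ε) = ε^{(d+1)/m − 1} if m > d+1 and ρ₂(ε) = |ln ε| if m = d+1. -/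
/-!
In polar coordinates the integral is `(d - 1) ω_{d-1} ∫₀^R r^d / (ε + τ r^m) dr`.

If `m > d + 1`, the substitution `r = (ε / τ)^{1/m} u` turns the integral over `(0, ∞)` into
`τ^{-p} ε^{p-1} ∫₀^∞ u^d / (1 + u^m) du` with `p = (d + 1) / m`, and `u = t^{1/m}`,
`t = x / (1 - x)` identify the last integral with the Beta integral `B(p, 1 - p) / m`. The
integral over `(R, ∞)` stays bounded as `ε → 0`, while `ε^{p-1} → ∞`.

If `m = d + 1`, the integrand is the derivative of `log (ε + τ r^m) / (m τ)`, so the integral is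
`(log (ε + τ R^m) - log ε) / (m τ) ~ |log ε| / (m τ)`.
-/

open MeasureTheory Filter

open Set Real Asymptotics Topology

theorem integral_Ioo_rpow_mul_one_sub_rpow {a b : ℝ} (ha : 0 < a) (hb : 0 < b) :
    ∫ x in Ioo (0 : ℝ) 1, x ^ (a - 1) * (1 - x) ^ (b - 1) =
      Gamma a * Gamma b / Gamma (a + b) := by
  have h := Complex.betaIntegral_eq_Gamma_mul_div a b (by simpa) (by simpa)
  rw [Complex.betaIntegral, intervalIntegral.integral_of_le zero_le_one,
    integral_Ioc_eq_integral_Ioo, ← Complex.ofReal_add, Complex.Gamma_ofReal,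
    Complex.Gamma_ofReal, Complex.Gamma_ofReal] at h
  have hreal : ∫ x in Ioo (0 : ℝ) 1, (x : ℂ) ^ ((a : ℂ) - 1) * (1 - (x : ℂ)) ^ ((b : ℂ) - 1) =
      ((∫ x in Ioo (0 : ℝ) 1, x ^ (a - 1) * (1 - x) ^ (b - 1) : ℝ) : ℂ) := by
    refine Eq.trans ?_ integral_complex_ofReal
    refine setIntegral_congr_fun measurableSet_Ioo fun x hx => ?_
    rw [Complex.ofReal_mul, Complex.ofReal_cpow hx.1.le,
      Complex.ofReal_cpow (by linarith [hx.2])]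
    push_cast
    rfl
  exact_mod_cast hreal ▸ h

theorem integral_Ioi_rpow_div_one_add_rpow_add {a b : ℝ} (ha : 0 < a) (hb : 0 < b) :
    ∫ t in Ioi (0 : ℝ), t ^ (a - 1) / (1 + t) ^ (a + b) =
      Gamma a * Gamma b / Gamma (a + b) := by
  have himage : (fun x : ℝ => x / (1 - x)) '' Ioo 0 1 = Ioi 0 := by
    ext t
    refine ⟨?_, fun ht => ⟨t / (1 + t), ?_, ?_⟩⟩
    · rintro ⟨x, hx, rfl⟩
      exact div_pos hx.1 (by linarith [hx.2])
    · have ht : (0 : ℝ) < t := ht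
      exact ⟨by positivity, (div_lt_one (by linarith)).2 (by linarith)⟩
    · have ht : (0 : ℝ) < t := ht
      field_simp
      ring
  have hderiv : ∀ x ∈ Ioo (0 : ℝ) 1,
      HasDerivWithinAt (fun x : ℝ => x / (1 - x)) ((1 - x) ^ 2)⁻¹ (Ioo 0 1) x := by
    intro x hx
    have hx1 : 1 - x ≠ 0 := by linarith [hx.2]
    refine (((hasDerivAt_id x).div ((hasDerivAt_id x).const_sub 1) hx1).congr_deriv ?_)
      |>.hasDerivWithinAt
    simp only [id_eq]
    field_simp
    ring
  have hinj : InjOn (fun x : ℝ => x / (1 - x)) (Ioo 0 1) := by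
    intro x hx y hy hxy
    have hx1 : 1 - x ≠ 0 := by linarith [hx.2]
    have hy1 : 1 - y ≠ 0 := by linarith [hy.2]
    field_simp at hxy
    linarith
  rw [← himage, integral_image_eq_integral_abs_deriv_smul measurableSet_Ioo hderiv hinj,
    ← integral_Ioo_rpow_mul_one_sub_rpow ha hb]
  refine setIntegral_congr_fun measurableSet_Ioo fun x hx => ?_
  have hu : 0 < 1 - x := by linarith [hx.2]
  have hsum : 1 + x / (1 - x) = (1 - x)⁻¹ := by field_simp; ring
  have hexp :
      (1 - x) ^ (a + b) = (1 - x) ^ (b - 1) * (1 - x) ^ (a - 1) * (1 - x) ^ (2 : ℕ) := by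
    rw [← rpow_natCast, ← rpow_add hu, ← rpow_add hu]
    norm_num
    ring_nf
  have : 0 < (1 - x) ^ (a - 1) := rpow_pos_of_pos hu _
  rw [smul_eq_mul, abs_of_pos (by positivity), hsum, div_rpow hx.1.le hu.le,
    inv_rpow hu.le, hexp]
  field_simp

theorem integral_Ioi_rpow_div_one_add_rpow {b m : ℝ} (hb : -1 < b) (hbm : b + 1 < m) :
    ∫ u in Ioi (0 : ℝ), u ^ b / (1 + u ^ m) =
      Gamma ((b + 1) / m) * Gamma (1 - (b + 1) / m) / m := by
  have hm : 0 < m := by linarith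
  set p := (b + 1) / m with hp
  have hp0 : 0 < p := div_pos (by linarith) hm
  have hp1 : p < 1 := (div_lt_one hm).2 hbm
  have hmellin := integral_Ioi_rpow_div_one_add_rpow_add hp0 (sub_pos.2 hp1)
  rw [add_sub_cancel, Gamma_one, div_one] at hmellin
  have hsubst := integral_comp_rpow_Ioi (fun t => t ^ (p - 1) / (1 + t) ^ (1 : ℝ)) hm.ne'
  rw [hmellin] at hsubst
  rw [eq_div_iff hm.ne', ← hsubst, mul_comm, ← integral_const_mul]
  refine setIntegral_congr_fun measurableSet_Ioi fun u hu => ?_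
  have hu : (0 : ℝ) < u := hu
  have hexp : u ^ (m - 1) * (u ^ m) ^ (p - 1) = u ^ b := by
    rw [← rpow_mul hu.le, ← rpow_add hu, hp]
    congr 1
    field_simp
    ring
  rw [smul_eq_mul, abs_of_pos hm, rpow_one, ← hexp]
  ring

theorem integral_Ioi_rpow_div_add_mul_rpow (b : ℝ) {m τ ε : ℝ} (hm : m ≠ 0) (hτ : 0 < τ)
    (hε : 0 < ε) :
    ∫ r in Ioi (0 : ℝ), r ^ b / (ε + τ * r ^ m) =
      τ ^ (-((b + 1) / m)) * ε ^ ((b + 1) / m - 1) * ∫ u in Ioi (0 : ℝ), u ^ b / (1 + u ^ m) := by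
  set c : ℝ := (ε / τ) ^ m⁻¹
  have hc : 0 < c := rpow_pos_of_pos (div_pos hε hτ) _
  have hcm : τ * c ^ m = ε := by
    rw [← rpow_mul (div_pos hε hτ).le, inv_mul_cancel₀ hm, rpow_one]
    field_simp
  have hcb : c * c ^ b = τ ^ (-((b + 1) / m)) * ε ^ ((b + 1) / m) := by
    rw [show c * c ^ b = c ^ (b + 1) by rw [rpow_add hc, rpow_one, mul_comm],
      ← rpow_mul (div_pos hε hτ).le, div_rpow hε.le hτ.le, rpow_neg hτ.le]
    ring_nf
  have hsubst := integral_comp_mul_left_Ioi (fun r => r ^ b / (ε + τ * r ^ m)) 0 hc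
  rw [mul_zero, smul_eq_mul, eq_inv_mul_iff_mul_eq₀ hc.ne'] at hsubst
  rw [← hsubst, ← integral_const_mul, ← integral_const_mul]
  refine setIntegral_congr_fun measurableSet_Ioi fun u hu => ?_
  have hu : (0 : ℝ) < u := hu
  rw [mul_rpow hc.le hu.le, mul_rpow hc.le hu.le,
    show ε + τ * (c ^ m * u ^ m) = ε * (1 + u ^ m) by rw [← mul_assoc, hcm]; ring,
    rpow_sub hε, rpow_one, mul_div_assoc', ← mul_assoc, hcb]
  field_simp

theorem rpow_div_add_mul_rpow_le {b m τ ε r : ℝ} (hτ : 0 < τ) (hε : 0 ≤ ε) (hr : 0 < r) :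
    r ^ b / (ε + τ * r ^ m) ≤ τ⁻¹ * r ^ (b - m) := by
  have hrm : 0 < τ * r ^ m := by positivity
  calc r ^ b / (ε + τ * r ^ m) ≤ r ^ b / (τ * r ^ m) := by gcongr; linarith
    _ = τ⁻¹ * r ^ (b - m) := by rw [rpow_sub hr]; field_simp

theorem integrableOn_Ioi_rpow_div_add_mul_rpow {b m τ ε R : ℝ} (hbm : b + 1 < m) (hτ : 0 < τ)
    (hε : 0 ≤ ε) (hR : 0 < R) :
    IntegrableOn (fun r : ℝ => r ^ b / (ε + τ * r ^ m)) (Ioi R) := by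
  refine Integrable.mono'
    ((integrableOn_Ioi_rpow_of_lt (a := b - m) (by linarith) hR).const_mul τ⁻¹)
    (Measurable.aestronglyMeasurable (by fun_prop)) ?_
  filter_upwards [ae_restrict_mem measurableSet_Ioi] with r (hRr : R < r)
  have hr : 0 < r := hR.trans hRr
  rw [norm_of_nonneg (by positivity)]
  exact rpow_div_add_mul_rpow_le hτ hε hr

theorem integrableOn_Ioc_rpow_div_add_mul_rpow {b m τ ε : ℝ} (hb : 0 ≤ b) (hm : 0 < m)
    (hτ : 0 < τ) (hε : 0 < ε) (R : ℝ) :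
    IntegrableOn (fun r : ℝ => r ^ b / (ε + τ * r ^ m)) (Ioc 0 R) := by
  refine (ContinuousOn.integrableOn_compact isCompact_Icc ?_).mono_set Ioc_subset_Icc_self
  refine ContinuousOn.div (continuous_rpow_const hb).continuousOn
    (continuous_const.add (continuous_const.mul (continuous_rpow_const hm.le))).continuousOn
    fun r hr => ?_
  have : 0 ≤ r ^ m := rpow_nonneg hr.1 m
  positivity

theorem isEquivalent_integral_Ioo_rpow_div_add_mul_rpow {b m τ R : ℝ} (hb : 0 ≤ b)
    (hbm : b + 1 < m) (hτ : 0 < τ) (hR : 0 < R) :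
    (fun ε => ∫ r in Ioo (0 : ℝ) R, r ^ b / (ε + τ * r ^ m)) ~[𝓝[>] 0] fun ε =>
      Gamma (1 - (b + 1) / m) * Gamma ((b + 1) / m) / (m * τ ^ ((b + 1) / m)) *
        ε ^ ((b + 1) / m - 1) := by
  have hm : 0 < m := by linarith
  set p := (b + 1) / m
  have hp0 : 0 < p := div_pos (by linarith) hm
  have hp1 : p < 1 := (div_lt_one hm).2 hbm
  set C := Gamma (1 - p) * Gamma p / (m * τ ^ p)
  have hC : 0 < C := by
    have := Gamma_pos_of_pos (sub_pos.2 hp1)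
    have := Gamma_pos_of_pos hp0
    positivity
  set T := fun ε => ∫ r in Ioi R, r ^ b / (ε + τ * r ^ m)
  have hsplit : ∀ ε ∈ Ioi (0 : ℝ), C * ε ^ (p - 1) - T ε =
      ∫ r in Ioo (0 : ℝ) R, r ^ b / (ε + τ * r ^ m) := by
    intro ε (hε : 0 < ε)
    rw [sub_eq_iff_eq_add, ← integral_Ioc_eq_integral_Ioo, ← setIntegral_union
      Ioc_disjoint_Ioi_same measurableSet_Ioi
      (integrableOn_Ioc_rpow_div_add_mul_rpow hb hm hτ hε R)
      (integrableOn_Ioi_rpow_div_add_mul_rpow hbm hτ hε.le hR), Ioc_union_Ioi_eq_Ioi hR.le,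
      integral_Ioi_rpow_div_add_mul_rpow b hm.ne' hτ hε,
      integral_Ioi_rpow_div_one_add_rpow (by linarith) hbm, rpow_neg hτ.le]
    ring
  have htail : T =O[𝓝[>] 0] fun _ => (1 : ℝ) := by
    refine IsBigO.of_bound (∫ r in Ioi R, τ⁻¹ * r ^ (b - m)) ?_
    filter_upwards [self_mem_nhdsWithin] with ε (hε : 0 < ε)
    rw [norm_one, mul_one, norm_of_nonneg (setIntegral_nonneg measurableSet_Ioi fun r hr => ?_)]
    · exact setIntegral_mono_on (integrableOn_Ioi_rpow_div_add_mul_rpow hbm hτ hε.le hR)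
        ((integrableOn_Ioi_rpow_of_lt (a := b - m) (by linarith) hR).const_mul τ⁻¹)
        measurableSet_Ioi fun r hr => rpow_div_add_mul_rpow_le hτ hε.le (hR.trans hr)
    · have : 0 < r := hR.trans hr
      positivity
  have hmain : Tendsto (fun ε => ‖C * ε ^ (p - 1)‖) (𝓝[>] 0) atTop := by
    refine tendsto_norm_atTop_atTop.comp ((tendsto_rpow_neg_nhdsGT_zero ?_).const_mul_atTop hC)
    linarith
  exact (IsEquivalent.refl.sub_isLittleO (htail.trans_isLittleO
    ((isLittleO_one_left_iff ℝ).2 hmain))).congr_left (eventually_nhdsWithin_of_forall hsplit)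

theorem integral_Ioo_rpow_sub_one_div_add_mul_rpow {m τ ε R : ℝ} (hm : 1 ≤ m) (hτ : 0 < τ)
    (hε : 0 < ε) (hR : 0 ≤ R) :
    ∫ r in Ioo (0 : ℝ) R, r ^ (m - 1) / (ε + τ * r ^ m) =
      (log (ε + τ * R ^ m) - log ε) / (m * τ) := by
  have hm0 : 0 < m := by linarith
  have hpos : ∀ r : ℝ, 0 ≤ r → 0 < ε + τ * r ^ m := fun r hr => by
    have := rpow_nonneg hr m
    positivity
  have hderiv : ∀ r ∈ uIcc 0 R, HasDerivAt (fun r => (m * τ)⁻¹ * log (ε + τ * r ^ m))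
      (r ^ (m - 1) / (ε + τ * r ^ m)) r := by
    intro r hr
    rw [uIcc_of_le hR] at hr
    refine ((((hasDerivAt_rpow_const (Or.inr hm)).const_mul τ).const_add ε).log
      (hpos r hr.1).ne' |>.const_mul _).congr_deriv ?_
    field_simp
  have hcont : ContinuousOn (fun r => r ^ (m - 1) / (ε + τ * r ^ m)) (uIcc 0 R) :=
    ContinuousOn.div (continuous_rpow_const (by linarith)).continuousOn
      (continuous_const.add (continuous_const.mul (continuous_rpow_const hm0.le))).continuousOn
      fun r hr => (hpos r (by rw [uIcc_of_le hR] at hr; exact hr.1)).ne'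
  rw [← integral_Ioc_eq_integral_Ioo, ← intervalIntegral.integral_of_le hR,
    intervalIntegral.integral_eq_sub_of_hasDerivAt hderiv hcont.intervalIntegrable,
    zero_rpow hm0.ne']
  ring_nf

theorem isEquivalent_integral_Ioo_rpow_sub_one_div_add_mul_rpow {m τ R : ℝ} (hm : 1 ≤ m)
    (hτ : 0 < τ) (hR : 0 < R) :
    (fun ε => ∫ r in Ioo (0 : ℝ) R, r ^ (m - 1) / (ε + τ * r ^ m)) ~[𝓝[>] 0] fun ε =>
      |log ε| / (m * τ) := by
  have hRm : 0 < τ * R ^ m := by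
    have := rpow_pos_of_pos hR m
    positivity
  have hnorm : Tendsto (fun ε => ‖-log ε‖) (𝓝[>] 0) atTop := by
    simpa only [norm_neg, norm_eq_abs, Function.comp_def] using
      tendsto_abs_atBot_atTop.comp tendsto_log_nhdsGT_zero
  have hbounded : (fun ε => log (ε + τ * R ^ m)) =o[𝓝[>] 0] fun ε => -log ε := by
    have hlim : Tendsto (fun ε => ε + τ * R ^ m) (𝓝[>] 0) (𝓝 (τ * R ^ m)) := by
      simpa only [zero_add] using
        ((continuous_add_const (τ * R ^ m)).tendsto 0).mono_left nhdsWithin_le_nhds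
    exact ((hlim.log hRm.ne').isBigO_one ℝ).trans_isLittleO ((isLittleO_one_left_iff ℝ).2 hnorm)
  have hneg : (fun ε => -log ε) =ᶠ[𝓝[>] 0] fun ε => |log ε| := by
    filter_upwards [Ioo_mem_nhdsGT zero_lt_one] with ε hε
    rw [abs_of_neg (log_neg hε.1 hε.2)]
  refine (((IsEquivalent.refl.add_isLittleO hbounded).trans_eventuallyEq hneg).div
    (IsEquivalent.refl (u := fun _ => m * τ))).congr_left ?_
  filter_upwards [self_mem_nhdsWithin] with ε (hε : 0 < ε)
  rw [integral_Ioo_rpow_sub_one_div_add_mul_rpow hm hτ hε hR.le]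
  simp only [Pi.div_apply, Pi.add_apply]
  ring

theorem setIntegral_ball_fun_norm_addHaar {E F : Type*} [NormedAddCommGroup E]
    [NormedSpace ℝ E] [Nontrivial E] [FiniteDimensional ℝ E] [MeasurableSpace E] [BorelSpace E]
    [NormedAddCommGroup F] [NormedSpace ℝ F] (μ : Measure E) [μ.IsAddHaarMeasure] (f : ℝ → F)
    (R : ℝ) :
    ∫ x in Metric.ball (0 : E) R, f ‖x‖ ∂μ =
      Module.finrank ℝ E • μ.real (Metric.ball 0 1) •
        ∫ y in Ioo (0 : ℝ) R, y ^ (Module.finrank ℝ E - 1) • f y := by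
  have hball : (Metric.ball (0 : E) R).indicator (fun x => f ‖x‖) =
      fun x => (Iio R).indicator f ‖x‖ := by
    ext x
    simp only [indicator, Metric.mem_ball, dist_zero_right, mem_Iio]
  rw [← integral_indicator Metric.isOpen_ball.measurableSet, hball, integral_fun_norm_addHaar μ]
  rw [← Ioi_inter_Iio, ← setIntegral_indicator measurableSet_Iio]
  simp only [indicator_smul_apply]

theorem integral_ball_sq_norm_div_add_mul_norm_rpow {d : ℕ} (hd : 2 ≤ d) (m τ ε R : ℝ) :
    ∫ x : EuclideanSpace ℝ (Fin (d - 1)) in Metric.ball 0 R, ‖x‖ ^ 2 / (ε + τ * ‖x‖ ^ m) =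
      ((d : ℝ) - 1) * (volume (Metric.ball (0 : EuclideanSpace ℝ (Fin (d - 1))) 1)).toReal *
        ∫ r in Ioo (0 : ℝ) R, r ^ (d : ℝ) / (ε + τ * r ^ m) := by
  have : Nontrivial (EuclideanSpace ℝ (Fin (d - 1))) :=
    Module.nontrivial_of_finrank_pos (R := ℝ) (by rw [finrank_euclideanSpace_fin]; omega)
  rw [setIntegral_ball_fun_norm_addHaar volume (fun r => r ^ 2 / (ε + τ * r ^ m)),
    finrank_euclideanSpace_fin, nsmul_eq_mul, smul_eq_mul, Nat.cast_pred (by omega), ← mul_assoc,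
    measureReal_def]
  congr 1
  refine setIntegral_congr_fun measurableSet_Ioo fun r _ => ?_
  rw [smul_eq_mul, ← mul_div_assoc, ← pow_add, rpow_natCast, show d - 1 - 1 + 2 = d by omega]

theorem tendsto_const_mul_div_const_mul_of_isEquivalent {α : Type*} {l : Filter α}
    {f g : α → ℝ} {c : ℝ} (hc : c ≠ 0) (hfg : f ~[l] g) (hg : ∀ᶠ x in l, g x ≠ 0) :
    Tendsto (fun x => c * f x / (c * g x)) l (𝓝 1) := by
  simpa only [mul_div_mul_left _ _ hc, Pi.div_def] using (isEquivalent_iff_tendsto_one hg).1 hfg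

theorem gap_weighted_integral_asymptotics_general (d : ℕ) (hd : 2 ≤ d) (m τ R : ℝ)
    (hτ : 0 < τ) (hR : 0 < R) :
    (((d : ℝ) + 1 < m → Tendsto (fun ε : ℝ =>
        (∫ x : EuclideanSpace ℝ (Fin (d - 1)) in Metric.ball 0 R,
            ‖x‖ ^ 2 / (ε + τ * ‖x‖ ^ m)) /
          ((((d : ℝ) - 1) *
              ((volume (Metric.ball (0 : EuclideanSpace ℝ (Fin (d - 1))) 1)).toReal *
                (Real.Gamma (1 - ((d : ℝ) + 1) / m) * Real.Gamma (((d : ℝ) + 1) / m)) /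
                (m * τ ^ (((d : ℝ) + 1) / m)))) *
            ε ^ (((d : ℝ) + 1) / m - 1)))
      (nhdsWithin 0 (Set.Ioi 0)) (nhds 1)) ∧
    (m = (d : ℝ) + 1 → Tendsto (fun ε : ℝ =>
        (∫ x : EuclideanSpace ℝ (Fin (d - 1)) in Metric.ball 0 R,
            ‖x‖ ^ 2 / (ε + τ * ‖x‖ ^ m)) /
          ((((d : ℝ) - 1) *
              ((volume (Metric.ball (0 : EuclideanSpace ℝ (Fin (d - 1))) 1)).toReal /
                (m * τ ^ (((d : ℝ) + 1) / m)))) *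
            |Real.log ε|))
      (nhdsWithin 0 (Set.Ioi 0)) (nhds 1))) := by
  have hd' : (2 : ℝ) ≤ d := by exact_mod_cast hd
  have hc :
      ((d : ℝ) - 1) * (volume (Metric.ball (0 : EuclideanSpace ℝ (Fin (d - 1))) 1)).toReal ≠ 0 :=
    mul_ne_zero (by linarith) (ENNReal.toReal_ne_zero.2
      ⟨(Metric.measure_ball_pos volume _ one_pos).ne', measure_ball_lt_top.ne⟩)
  refine ⟨fun hm => ?_, fun hm => ?_⟩
  · have hm0 : 0 < m := by linarith
    have hΓ : 0 < Gamma (1 - ((d : ℝ) + 1) / m) * Gamma (((d : ℝ) + 1) / m) :=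
      mul_pos (Gamma_pos_of_pos (sub_pos.2 ((div_lt_one hm0).2 hm)))
        (Gamma_pos_of_pos (by positivity))
    refine (tendsto_const_mul_div_const_mul_of_isEquivalent hc
      (isEquivalent_integral_Ioo_rpow_div_add_mul_rpow (Nat.cast_nonneg d) hm hτ hR) ?_).congr
      fun ε => ?_
    · filter_upwards [self_mem_nhdsWithin] with ε (hε : 0 < ε)
      positivity
    · rw [integral_ball_sq_norm_div_add_mul_norm_rpow hd]
      ring
  · subst hm
    have hlog := isEquivalent_integral_Ioo_rpow_sub_one_div_add_mul_rpow
      (m := (d : ℝ) + 1) (by linarith) hτ hR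
    rw [add_sub_cancel_right] at hlog
    refine (tendsto_const_mul_div_const_mul_of_isEquivalent hc hlog ?_).congr fun ε => ?_
    · filter_upwards [Ioo_mem_nhdsGT zero_lt_one] with ε hε
      exact div_ne_zero (abs_ne_zero.2 (log_neg hε.1 hε.2).ne) (by positivity)
    · rw [integral_ball_sq_norm_div_add_mul_norm_rpow hd, div_self (by linarith), rpow_one]
      ring

/-- Asymptotics of `∫_{B'_R ⊂ ℝ^{d−1}} |x'|² dx'/(ε + τ|x'|^m)` for `m ≥ d + 1`:
as `ε → 0⁺` the integral equals `(d−1) M₂ ρ₂(ε)(1 + o(1))`, where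
`M₂ = ω_{d−1} Γ[(d+1)/m]/(m τ^{(d+1)/m})` with `Γ[(d+1)/m] = Γ(1−(d+1)/m)Γ((d+1)/m)` and
`ρ₂(ε) = ε^{(d+1)/m − 1}` if `m > d+1`, and `Γ[(d+1)/m] = 1`, `ρ₂(ε) = |ln ε|` if
`m = d+1`. -/
theorem gap_weighted_integral_asymptotics (d : ℕ) (hd : 2 ≤ d) (m τ R : ℝ)
    (hm : (d : ℝ) + 1 ≤ m) (hτ : 0 < τ) (hR : 0 < R) :
    (((d : ℝ) + 1 < m → Tendsto (fun ε : ℝ =>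
        (∫ x : EuclideanSpace ℝ (Fin (d - 1)) in Metric.ball 0 R,
            ‖x‖ ^ 2 / (ε + τ * ‖x‖ ^ m)) /
          ((((d : ℝ) - 1) *
              ((volume (Metric.ball (0 : EuclideanSpace ℝ (Fin (d - 1))) 1)).toReal *
                (Real.Gamma (1 - ((d : ℝ) + 1) / m) * Real.Gamma (((d : ℝ) + 1) / m)) /
                (m * τ ^ (((d : ℝ) + 1) / m)))) *
            ε ^ (((d : ℝ) + 1) / m - 1)))
      (nhdsWithin 0 (Set.Ioi 0)) (nhds 1)) ∧
    (m = (d : ℝ) + 1 → Tendsto (fun ε : ℝ =>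
        (∫ x : EuclideanSpace ℝ (Fin (d - 1)) in Metric.ball 0 R,
            ‖x‖ ^ 2 / (ε + τ * ‖x‖ ^ m)) /
          ((((d : ℝ) - 1) *
              ((volume (Metric.ball (0 : EuclideanSpace ℝ (Fin (d - 1))) 1)).toReal /
                (m * τ ^ (((d : ℝ) + 1) / m)))) *
            |Real.log ε|))
      (nhdsWithin 0 (Set.Ioi 0)) (nhds 1))) :=
  gap_weighted_integral_asymptotics_general d hd m τ R hτ hR
end

section
/- Let m ≥ 2, τ₀ > 0, r₀ > 0. Then as ε → 0⁺, ∫_{ε^{1/(12m)} < |x| < r₀} dx/(τ₀|x|^m) + ∫_{|x| < ε^{1/(12m)}} dx/(ε + τ₀|x|^m) = (2Γ(1/m)Γ(1−1/m)/(m τ₀^{1/m})) ε^{1/m − 1} − 2 r₀^{1−m}/(τ₀(m−1)) + O(ε^{(10m+1)/(12m)}) (with the first term replaced by (2/τ₀)|ln ε| when m = 1 is excluded; here m ≥ 2). -/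
/-!
By symmetry in `x`, with `a = ε ^ (1 / (12 m))` the left-hand side is twice
`∫₀^∞ dy / (ε + τ₀ y^m) - ∫_{r₀}^∞ dy / (τ₀ y^m) + ∫_a^∞ (1 / (τ₀ y^m) - 1 / (ε + τ₀ y^m)) dy`.
Scaling `y` turns the first integral into `∫₀^∞ dx / (1 + x^m)`, which the substitutions `x^m = u`
and `u = t / (1 - t)` reduce to Euler's beta integral `B(1/m, 1 - 1/m) = Γ(1/m) Γ(1 - 1/m)`.
The second integral is elementary, and the integrand of the third is at most `ε / (τ₀² y^{2m})`,
so the third is at most `ε a^{1-2m} / (τ₀² (2m - 1))`, a constant times `ε ^ ((10m + 1) / (12m))`.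
-/

open MeasureTheory Set Real

theorem integral_Ioo_rpow_mul_one_sub_rpow_s17 {α β : ℝ} (hα : 0 < α) (hβ : 0 < β) :
    ∫ t in Ioo (0 : ℝ) 1, t ^ (α - 1) * (1 - t) ^ (β - 1) = Gamma α * Gamma β / Gamma (α + β) := by
  change _ = ProbabilityTheory.beta α β
  rw [ProbabilityTheory.beta_eq_betaIntegralReal α β hα hβ, Complex.betaIntegral,
    intervalIntegral.integral_of_le zero_le_one, ← integral_Ioc_eq_integral_Ioo,
    ← RCLike.re_to_complex, ← integral_re]
  · refine setIntegral_congr_fun measurableSet_Ioc fun t ⟨ht0, ht1⟩ ↦ ?_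
    norm_cast
    rw [← Complex.ofReal_cpow ht0.le, ← Complex.ofReal_cpow (by linarith), RCLike.re_to_complex,
      Complex.re_mul_ofReal, Complex.ofReal_re]
  · rw [← IntegrableOn, ← intervalIntegrable_iff_integrableOn_Ioc_of_le zero_le_one]
    exact Complex.betaIntegral_convergent (by simpa) (by simpa)

theorem integral_Ioi_rpow_div_one_add_rpow_s17 {α β : ℝ} (hα : 0 < α) (hβ : 0 < β) :
    ∫ x in Ioi (0 : ℝ), x ^ (α - 1) / (1 + x) ^ (α + β) = Gamma α * Gamma β / Gamma (α + β) := by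
  have himage : (fun t ↦ t / (1 - t)) '' Ioo (0 : ℝ) 1 = Ioi 0 := by
    ext x
    constructor
    · rintro ⟨t, ⟨ht0, ht1⟩, rfl⟩
      exact div_pos ht0 (by linarith)
    · intro (hx : 0 < x)
      refine ⟨x / (1 + x), ⟨by positivity, (div_lt_one (by positivity)).2 (by linarith)⟩, ?_⟩
      field_simp
      ring
  have hderiv : ∀ t ∈ Ioo (0 : ℝ) 1,
      HasDerivWithinAt (fun t ↦ t / (1 - t)) ((1 - t)⁻¹ ^ 2) (Ioo 0 1) t := by
    intro t ⟨_, ht1⟩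
    have hne : 1 - t ≠ 0 := by linarith
    refine (((hasDerivAt_id t).div ((hasDerivAt_id t).const_sub 1) hne).congr_deriv ?_)
      |>.hasDerivWithinAt
    simp only [id]
    field_simp
    ring
  have hinj : InjOn (fun t ↦ t / (1 - t)) (Ioo (0 : ℝ) 1) := by
    intro t ⟨_, ht⟩ s ⟨_, hs⟩ h
    have : 1 - t ≠ 0 := by linarith
    have : 1 - s ≠ 0 := by linarith
    field_simp at h
    linarith
  rw [← himage, integral_image_eq_integral_abs_deriv_smul measurableSet_Ioo hderiv hinj,
    ← integral_Ioo_rpow_mul_one_sub_rpow_s17 hα hβ]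
  refine setIntegral_congr_fun measurableSet_Ioo fun t ⟨ht0, ht1⟩ ↦ ?_
  have hu : 0 < 1 - t := by linarith
  have hsplit : (1 - t) ^ (α + β) = (1 - t) ^ (β - 1) * (1 - t) ^ (α - 1) * (1 - t) ^ 2 := by
    rw [← rpow_natCast, ← rpow_add hu, ← rpow_add hu]
    congr 1
    push_cast
    ring
  have hone_add : 1 + t / (1 - t) = (1 - t)⁻¹ := by
    field_simp
    ring
  rw [smul_eq_mul, hone_add, abs_of_pos (by positivity), div_rpow ht0.le hu.le,
    inv_rpow hu.le, hsplit]
  field_simp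

theorem integral_Ioi_one_div_one_add_rpow {m : ℝ} (hm : 1 < m) :
    ∫ x in Ioi (0 : ℝ), 1 / (1 + x ^ m) = Gamma (1 / m) * Gamma (1 - 1 / m) / m := by
  have hm0 : 0 < m := by linarith
  have hbeta := integral_Ioi_rpow_div_one_add_rpow_s17 (α := 1 / m) (β := 1 - 1 / m)
    (by positivity) (by rw [sub_pos, div_lt_one hm0]; exact hm)
  simp only [add_sub_cancel, rpow_one, Gamma_one, div_one] at hbeta
  rw [← integral_comp_rpow_Ioi_of_pos hm0] at hbeta
  rw [← hbeta, eq_div_iff hm0.ne', ← integral_mul_const]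
  refine setIntegral_congr_fun measurableSet_Ioi fun x (hx : 0 < x) ↦ ?_
  rw [smul_eq_mul, ← rpow_mul hx.le, mul_sub, mul_one_div_cancel hm0.ne', mul_one]
  have : x ^ (m - 1) * x ^ (1 - m) = 1 := by
    rw [← rpow_add hx, sub_add_sub_cancel, sub_self, rpow_zero]
  linear_combination (-m / (1 + x ^ m)) * this

theorem integral_Ioi_one_div_add_mul_rpow {m ε τ : ℝ} (hm : 1 < m) (hε : 0 < ε) (hτ : 0 < τ) :
    ∫ x in Ioi (0 : ℝ), 1 / (ε + τ * x ^ m)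
      = Gamma (1 / m) * Gamma (1 - 1 / m) / (m * τ ^ (1 / m)) * ε ^ (1 / m - 1) := by
  have hm0 : 0 < m := by linarith
  set c := (ε / τ) ^ (1 / m)
  have hc : 0 < c := by positivity
  have hcm : c ^ m = ε / τ := by
    rw [← rpow_mul (by positivity), one_div_mul_cancel hm0.ne', rpow_one]
  have hscale := integral_comp_mul_left_Ioi (fun x ↦ 1 / (ε + τ * x ^ m)) 0 hc
  rw [mul_zero, smul_eq_mul] at hscale
  rw [← mul_inv_cancel_left₀ hc.ne' (∫ x in Ioi (0 : ℝ), 1 / (ε + τ * x ^ m)), ← hscale]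
  have hsub : ∀ x ∈ Ioi (0 : ℝ), 1 / (ε + τ * (c * x) ^ m) = ε⁻¹ * (1 / (1 + x ^ m)) := by
    intro x (hx : 0 < x)
    rw [mul_rpow hc.le hx.le, hcm]
    field_simp
  rw [setIntegral_congr_fun measurableSet_Ioi hsub, integral_const_mul,
    integral_Ioi_one_div_one_add_rpow hm,
    show c = ε ^ (1 / m) / τ ^ (1 / m) from div_rpow hε.le hτ.le _, rpow_sub hε, rpow_one]
  field_simp

theorem integrableOn_Ioi_one_div_add_mul_rpow {m ε τ : ℝ} (hm : 1 < m) (hε : 0 < ε)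
    (hτ : 0 < τ) : IntegrableOn (fun x ↦ 1 / (ε + τ * x ^ m)) (Ioi 0) := by
  have hm' : 0 < 1 - 1 / m := by rw [sub_pos, div_lt_one (by linarith)]; exact hm
  -- a non-integrable function has integral `0`
  refine Integrable.of_integral_ne_zero (ne_of_gt ?_)
  rw [integral_Ioi_one_div_add_mul_rpow hm hε hτ]
  have := Gamma_pos_of_pos hm'
  have := Gamma_pos_of_pos (one_div_pos.2 (zero_lt_one.trans hm))
  positivity

theorem integral_Ioi_one_div_mul_rpow {m τ a : ℝ} (hm : 1 < m) (ha : 0 < a) :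
    ∫ y in Ioi a, 1 / (τ * y ^ m) = a ^ (1 - m) / (τ * (m - 1)) := by
  have hpow : ∀ y ∈ Ioi a, 1 / (τ * y ^ m) = τ⁻¹ * y ^ (-m) := fun y (hy : a < y) ↦ by
    rw [rpow_neg (ha.trans hy).le]
    ring
  rw [setIntegral_congr_fun measurableSet_Ioi hpow, integral_const_mul,
    integral_Ioi_rpow_of_lt (by linarith) ha, neg_add_eq_sub, neg_div, ← div_neg, neg_sub,
    mul_comm τ, ← div_div]
  ring

theorem integrableOn_Ioi_one_div_mul_rpow {m τ a : ℝ} (hm : 1 < m) (ha : 0 < a) :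
    IntegrableOn (fun y ↦ 1 / (τ * y ^ m)) (Ioi a) := by
  refine IntegrableOn.congr_fun ((integrableOn_Ioi_rpow_of_lt (by linarith : -m < -1) ha).const_mul
    τ⁻¹) (fun y (hy : a < y) ↦ ?_) measurableSet_Ioi
  rw [rpow_neg (ha.trans hy).le]
  ring

theorem setIntegral_preimage_abs (f : ℝ → ℝ) {T : Set ℝ} (hT : MeasurableSet T) :
    ∫ x in abs ⁻¹' T, f |x| = 2 * ∫ y in T ∩ Ioi 0, f y := by
  rw [← integral_indicator (measurable_abs hT), inter_comm, ← setIntegral_indicator hT,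
    ← integral_comp_abs]
  rfl

theorem setIntegral_Ioo_eq_sub {f : ℝ → ℝ} {a b : ℝ} (hf : IntegrableOn f (Ioi a)) (hab : a ≤ b) :
    ∫ x in Ioo a b, f x = (∫ x in Ioi a, f x) - ∫ x in Ioi b, f x := by
  rw [← integral_Ioc_eq_integral_Ioo, ← intervalIntegral.integral_of_le hab,
    intervalIntegral.integral_Ioi_sub_Ioi hf hab]

theorem abs_one_div_sub_one_div_add_le {A ε : ℝ} (hA : 0 < A) (hε : 0 ≤ ε) :
    |1 / A - 1 / (ε + A)| ≤ ε / A ^ 2 := by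
  rw [abs_of_nonneg (sub_nonneg.2 (one_div_le_one_div_of_le hA (by linarith))),
    div_sub_div _ _ hA.ne' (by positivity), div_le_div_iff₀ (by positivity) (by positivity)]
  nlinarith [mul_nonneg hε (sq_nonneg A), mul_nonneg (mul_nonneg hε hε) hA.le]

theorem abs_integral_Ioi_one_div_mul_rpow_sub_le {m τ ε a : ℝ} (hm : 1 < 2 * m) (hτ : 0 < τ)
    (hε : 0 ≤ ε) (ha : 0 < a) :
    |∫ y in Ioi a, (1 / (τ * y ^ m) - 1 / (ε + τ * y ^ m))|
      ≤ ε * a ^ (1 - 2 * m) / (τ ^ 2 * (2 * m - 1)) := by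
  have hdom : ∀ y ∈ Ioi a, ‖1 / (τ * y ^ m) - 1 / (ε + τ * y ^ m)‖ ≤ ε / τ ^ 2 * y ^ (-(2 * m)) :=
    fun y (hy : a < y) ↦ by
      have hy : 0 < y := ha.trans hy
      calc ‖1 / (τ * y ^ m) - 1 / (ε + τ * y ^ m)‖ ≤ ε / (τ * y ^ m) ^ 2 :=
            abs_one_div_sub_one_div_add_le (by positivity) hε
        _ = ε / τ ^ 2 * y ^ (-(2 * m)) := by
            rw [rpow_neg hy.le, mul_comm 2 m, rpow_mul hy.le, rpow_two]
            ring
  refine (norm_integral_le_of_norm_le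
    ((integrableOn_Ioi_rpow_of_lt (by linarith) ha).const_mul _)
    ((ae_restrict_iff' measurableSet_Ioi).2 (.of_forall hdom))).trans_eq ?_
  rw [integral_const_mul, integral_Ioi_rpow_of_lt (by linarith) ha, neg_add_eq_sub, neg_div,
    ← div_neg, neg_sub, ← div_div]
  ring

theorem setIntegral_abs_split_eq {m τ ε a r : ℝ} (hm : 1 < m) (hτ : 0 < τ) (hε : 0 < ε)
    (ha : 0 < a) (har : a ≤ r) :
    (∫ x in {x : ℝ | a < |x| ∧ |x| < r}, 1 / (τ * |x| ^ m))
        + ∫ x in {x : ℝ | |x| < a}, 1 / (ε + τ * |x| ^ m)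
      = 2 * ((∫ y in Ioi 0, 1 / (ε + τ * y ^ m)) - r ^ (1 - m) / (τ * (m - 1))
        + ∫ y in Ioi a, (1 / (τ * y ^ m) - 1 / (ε + τ * y ^ m))) := by
  have hf := integrableOn_Ioi_one_div_add_mul_rpow hm hε hτ
  have hg := integrableOn_Ioi_one_div_mul_rpow (τ := τ) hm ha
  change (∫ x in abs ⁻¹' Ioo a r, _) + ∫ x in abs ⁻¹' Iio a, _ = _
  rw [setIntegral_preimage_abs (fun y ↦ 1 / (τ * y ^ m)) measurableSet_Ioo,
    setIntegral_preimage_abs (fun y ↦ 1 / (ε + τ * y ^ m)) measurableSet_Iio,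
    inter_eq_left.2 (Ioo_subset_Ioi_self.trans (Ioi_subset_Ioi ha.le)), Iio_inter_Ioi,
    setIntegral_Ioo_eq_sub hg har, setIntegral_Ioo_eq_sub hf ha.le,
    integral_Ioi_one_div_mul_rpow hm (ha.trans_le har),
    integral_sub hg (hf.mono_set (Ioi_subset_Ioi ha.le))]
  ring

/-- For `m ≥ 2`, `τ₀, r₀ > 0`, as `ε → 0⁺`,
`∫_{ε^{1/(12m)}<|x|<r₀} dx/(τ₀|x|^m) + ∫_{|x|<ε^{1/(12m)}} dx/(ε + τ₀|x|^m)
 = (2Γ(1/m)Γ(1−1/m)/(m τ₀^{1/m})) ε^{1/m−1} − 2 r₀^{1−m}/(τ₀(m−1)) + O(ε^{(10m+1)/(12m)})`. -/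
theorem split_integral_asymptotics (m τ₀ r₀ : ℝ) (hm : 2 ≤ m) (hτ : 0 < τ₀)
    (hr : 0 < r₀) :
    ∃ C > 0, ∃ ε₀ > 0, ∀ ε ∈ Set.Ioo (0 : ℝ) ε₀,
      abs ((∫ x in {x : ℝ | ε ^ (1 / (12 * m)) < |x| ∧ |x| < r₀}, 1 / (τ₀ * |x| ^ m))
          + (∫ x in {x : ℝ | |x| < ε ^ (1 / (12 * m))}, 1 / (ε + τ₀ * |x| ^ m))
          - ((2 * Real.Gamma (1 / m) * Real.Gamma (1 - 1 / m) / (m * τ₀ ^ (1 / m)))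
              * ε ^ (1 / m - 1)
            - 2 * r₀ ^ (1 - m) / (τ₀ * (m - 1))))
        ≤ C * ε ^ ((10 * m + 1) / (12 * m)) := by
  have hm1 : 1 < m := by linarith
  have hm0 : 0 < m := by linarith
  have h2m : 0 < 2 * m - 1 := by linarith
  refine ⟨2 / (τ₀ ^ 2 * (2 * m - 1)), by positivity, r₀ ^ (12 * m), by positivity, ?_⟩
  rintro ε ⟨hε, hεr⟩
  have ha : 0 < ε ^ (1 / (12 * m)) := by positivity
  have har : ε ^ (1 / (12 * m)) ≤ r₀ := by
    rw [one_div, rpow_inv_le_iff_of_pos hε.le hr.le (by positivity)]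
    exact hεr.le
  set a := ε ^ (1 / (12 * m))
  have hexp : ε * a ^ (1 - 2 * m) = ε ^ ((10 * m + 1) / (12 * m)) := by
    have : 1 + 1 / (12 * m) * (1 - 2 * m) = (10 * m + 1) / (12 * m) := by
      field_simp
      ring
    rw [← rpow_mul hε.le, ← this, rpow_add hε, rpow_one]
  rw [setIntegral_abs_split_eq hm1 hτ hε ha har, integral_Ioi_one_div_add_mul_rpow hm1 hε hτ]
  calc _ = 2 * |∫ y in Ioi a, (1 / (τ₀ * y ^ m) - 1 / (ε + τ₀ * y ^ m))| := by
        rw [← abs_two, ← abs_mul]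
        ring_nf
    _ ≤ 2 * (ε * a ^ (1 - 2 * m) / (τ₀ ^ 2 * (2 * m - 1))) := by
        gcongr
        exact abs_integral_Ioi_one_div_mul_rpow_sub_le (by linarith) hτ hε.le ha
    _ = _ := by
        rw [← hexp]
        ring
end

section
/- Let m ≥ 2, σ > 0, τ > 0, β = σ, and d ≥ 2 with m > d−1. Then ∫₀^R s^{d+σ−2}/(ε + τ s^m) ds divided by ∫₀^R s^{d−2}/(ε + τ s^m) ds is O(ε̂) as ε → 0⁺, where ε̂ = ε^{σ/m} if m > d−1+σ, ε̂ = ε^{σ/m}|ln ε| if m = d−1+σ, and ε̂ = ε^{1−(d−1)/m} if d−1 < m < d−1+σ. -/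
/-!
Write `I_p(ε) = ∫₀^R s^p / (ε + τ s^m) ds` and split at `δ = ε^{1/m}`, where the two terms of the
denominator balance. On `(0, δ)` the integrand is comparable to `s^p / ε`, which gives the lower
bound `I_p(ε) ≳ ε^{(p+1)/m - 1}` for the denominator (`p = d - 2`). For the numerator
(`q = d + σ - 2`) the part on `(0, δ)` is at most `ε^{(q+1)/m - 1} / (q + 1)` and the part on
`(δ, R)` at most `τ⁻¹ ∫_δ^R s^{q-m} ds`, which is `O(ε^{(q+1)/m - 1})`, `O(|log ε|)` or `O(1)`
according as `q + 1 < m`, `q + 1 = m` or `q + 1 > m`. Dividing the two bounds gives the rates.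
-/

open MeasureTheory Set

noncomputable def gapIntegral (ε τ m R p : ℝ) : ℝ :=
  ∫ s in Ioo 0 R, s ^ p / (ε + τ * s ^ m)

lemma rpow_inv_rpow_eq_rpow_div {x : ℝ} (hx : 0 ≤ x) (m a : ℝ) :
    (x ^ m⁻¹) ^ a = x ^ (a / m) := by
  rw [← Real.rpow_mul hx, inv_mul_eq_div]

lemma integral_rpow_le_of_lt_neg_one {a b r : ℝ} (ha : 0 < a) (hab : a ≤ b) (hr : r < -1) :
    ∫ s in a..b, s ^ r ≤ a ^ (r + 1) / -(r + 1) := by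
  rw [integral_rpow (.inr ⟨hr.ne, notMem_uIcc_of_lt ha (ha.trans_le hab)⟩), div_neg,
    ← neg_div]
  exact div_le_div_of_nonpos_of_le (by linarith)
    (by linarith [Real.rpow_nonneg (ha.trans_le hab).le (r + 1)])

lemma integral_rpow_le_of_neg_one_lt {a b r : ℝ} (ha : 0 ≤ a) (hr : -1 < r) :
    ∫ s in a..b, s ^ r ≤ b ^ (r + 1) / (r + 1) := by
  rw [integral_rpow (.inl hr)]
  gcongr
  · linarith
  · linarith [Real.rpow_nonneg ha (r + 1)]

lemma exists_abs_div_le_mul {N D g h t : ℝ → ℝ}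
    (hN : ∃ K > 0, ∃ ε₀ > 0, ∀ ε ∈ Ioo 0 ε₀, N ε ≤ K * g ε)
    (hD : ∃ c > 0, ∃ ε₀ > 0, ∀ ε ∈ Ioo 0 ε₀, c * h ε ≤ D ε)
    (hN0 : ∀ ε > 0, 0 ≤ N ε) (hh : ∀ ε > 0, 0 < h ε)
    (hgt : ∀ ε > 0, g ε = t ε * h ε) :
    ∃ C > 0, ∃ ε₀ > 0, ∀ ε ∈ Ioo 0 ε₀, |N ε / D ε| ≤ C * t ε := by
  obtain ⟨K, hK, ε₁, hε₁, hNK⟩ := hN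
  obtain ⟨c, hc, ε₂, hε₂, hDc⟩ := hD
  refine ⟨K / c, div_pos hK hc, min ε₁ ε₂, lt_min hε₁ hε₂, fun ε hε => ?_⟩
  have hN := hNK ε ⟨hε.1, hε.2.trans_le (min_le_left _ _)⟩
  have hD := hDc ε ⟨hε.1, hε.2.trans_le (min_le_right _ _)⟩
  have hhε := hh ε hε.1
  have hNε := hN0 ε hε.1
  rw [hgt ε hε.1] at hN
  have ht : 0 ≤ t ε :=
    (mul_nonneg_iff_of_pos_right hhε).1 ((mul_nonneg_iff_of_pos_left hK).1 (hNε.trans hN))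
  have hDε : 0 < D ε := (mul_pos hc hhε).trans_le hD
  rw [abs_of_nonneg (div_nonneg hNε hDε.le), div_le_iff₀ hDε]
  calc N ε ≤ K * (t ε * h ε) := hN
    _ = K / c * t ε * (c * h ε) := by field_simp
    _ ≤ K / c * t ε * D ε := by gcongr

section

variable {ε τ m R p : ℝ}

lemma gapIntegral_eq_intervalIntegral (hR : 0 ≤ R) :
    gapIntegral ε τ m R p = ∫ s in 0..R, s ^ p / (ε + τ * s ^ m) := by
  rw [gapIntegral, intervalIntegral.integral_of_le hR, integral_Ioc_eq_integral_Ioo]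

lemma gapIntegral_nonneg (hε : 0 < ε) (hτ : 0 ≤ τ) : 0 ≤ gapIntegral ε τ m R p := by
  refine setIntegral_nonneg measurableSet_Ioo fun s hs => ?_
  have := Real.rpow_nonneg hs.1.le m
  have := Real.rpow_nonneg hs.1.le p
  positivity

lemma intervalIntegrable_rpow_div_add_mul_rpow (hε : 0 < ε) (hτ : 0 ≤ τ) (hm : 0 ≤ m)
    (hp : 0 ≤ p) {a b : ℝ} (ha : 0 ≤ a) (hb : 0 ≤ b) :
    IntervalIntegrable (fun s : ℝ => s ^ p / (ε + τ * s ^ m)) volume a b := by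
  have hcont : ContinuousOn (fun s : ℝ => s ^ p / (ε + τ * s ^ m)) (Ici 0) :=
    (Real.continuous_rpow_const hp).continuousOn.div (continuous_const.add
      (continuous_const.mul (Real.continuous_rpow_const hm))).continuousOn fun s hs => by
        have := Real.rpow_nonneg (mem_Ici.1 hs) m
        positivity
  exact (hcont.mono fun s hs => (le_inf ha hb).trans hs.1).intervalIntegrable

lemma le_gapIntegral (hε : 0 < ε) (hτ : 0 ≤ τ) (hm : 0 < m) (hp : 0 ≤ p) (hR : 0 ≤ R)
    (hεR : ε ≤ R ^ m) :
    ε ^ ((p + 1) / m - 1) / ((p + 1) * (1 + τ)) ≤ gapIntegral ε τ m R p := by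
  set δ := ε ^ m⁻¹
  have hδ : 0 < δ := Real.rpow_pos_of_pos hε _
  have hδm : δ ^ m = ε := by
    rw [rpow_inv_rpow_eq_rpow_div hε.le, div_self hm.ne', Real.rpow_one]
  calc ε ^ ((p + 1) / m - 1) / ((p + 1) * (1 + τ))
      = ∫ s in 0..δ, s ^ p / ((1 + τ) * ε) := by
        rw [intervalIntegral.integral_div, integral_rpow (.inl (by linarith)),
          Real.zero_rpow (by linarith), sub_zero, rpow_inv_rpow_eq_rpow_div hε.le,
          Real.rpow_sub_one hε.ne']
        field_simp
    _ ≤ ∫ s in 0..δ, s ^ p / (ε + τ * s ^ m) := by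
      refine intervalIntegral.integral_mono_on hδ.le
        ((intervalIntegral.intervalIntegrable_rpow' (by linarith)).div_const _)
        (intervalIntegrable_rpow_div_add_mul_rpow hε hτ hm.le hp le_rfl hδ.le) fun s hs => ?_
      have hsm : s ^ m ≤ ε := hδm ▸ Real.rpow_le_rpow hs.1 hs.2 hm.le
      have := Real.rpow_nonneg hs.1 m
      exact div_le_div_of_nonneg_left (Real.rpow_nonneg hs.1 p) (by positivity) (by nlinarith)
    _ ≤ ∫ s in 0..R, s ^ p / (ε + τ * s ^ m) := by
      refine intervalIntegral.integral_mono_interval le_rfl hδ.le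
        ((Real.rpow_inv_le_iff_of_pos hε.le hR hm).2 hεR) ?_
        (intervalIntegrable_rpow_div_add_mul_rpow hε hτ hm.le hp le_rfl hR)
      filter_upwards [ae_restrict_mem measurableSet_Ioc] with s hs
      have := Real.rpow_nonneg hs.1.le m
      have := Real.rpow_nonneg hs.1.le p
      positivity
    _ = gapIntegral ε τ m R p := (gapIntegral_eq_intervalIntegral hR).symm

lemma gapIntegral_le (hε : 0 < ε) (hτ : 0 < τ) (hm : 0 < m) (hp : 0 ≤ p) (hR : 0 ≤ R)
    (hεR : ε ≤ R ^ m) :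
    gapIntegral ε τ m R p ≤
      ε ^ ((p + 1) / m - 1) / (p + 1) + τ⁻¹ * ∫ s in ε ^ m⁻¹..R, s ^ (p - m) := by
  set δ := ε ^ m⁻¹
  have hδ : 0 < δ := Real.rpow_pos_of_pos hε _
  have hδR : δ ≤ R := (Real.rpow_inv_le_iff_of_pos hε.le hR hm).2 hεR
  have hint := fun {a b : ℝ} (ha : 0 ≤ a) (hb : 0 ≤ b) =>
    intervalIntegrable_rpow_div_add_mul_rpow (a := a) (b := b) hε hτ.le hm.le hp ha hb
  rw [gapIntegral_eq_intervalIntegral hR,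
    ← intervalIntegral.integral_add_adjacent_intervals (hint le_rfl hδ.le) (hint hδ.le hR)]
  refine add_le_add ?_ ?_
  · calc ∫ s in 0..δ, s ^ p / (ε + τ * s ^ m)
        ≤ ∫ s in 0..δ, s ^ p / ε := by
          refine intervalIntegral.integral_mono_on hδ.le (hint le_rfl hδ.le)
            ((intervalIntegral.intervalIntegrable_rpow' (by linarith)).div_const _) fun s hs => ?_
          have := Real.rpow_nonneg hs.1 m
          exact div_le_div_of_nonneg_left (Real.rpow_nonneg hs.1 p) hε (by nlinarith)
      _ = ε ^ ((p + 1) / m - 1) / (p + 1) := by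
          rw [intervalIntegral.integral_div, integral_rpow (.inl (by linarith)),
            Real.zero_rpow (by linarith), sub_zero, rpow_inv_rpow_eq_rpow_div hε.le,
            Real.rpow_sub_one hε.ne']
          ring
  · calc ∫ s in δ..R, s ^ p / (ε + τ * s ^ m)
        ≤ ∫ s in δ..R, τ⁻¹ * s ^ (p - m) := by
          refine intervalIntegral.integral_mono_on hδR (hint hδ.le hR)
            ((intervalIntegral.intervalIntegrable_rpow (.inr (notMem_uIcc_of_lt hδ
              (hδ.trans_le hδR)))).const_mul _) fun s hs => ?_
          have hs0 : 0 < s := hδ.trans_le hs.1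
          have := Real.rpow_pos_of_pos hs0 m
          rw [Real.rpow_sub hs0, ← div_eq_inv_mul, div_div, mul_comm]
          exact div_le_div_of_nonneg_left (Real.rpow_nonneg hs0.le p) (by positivity)
            (by linarith)
      _ = τ⁻¹ * ∫ s in δ..R, s ^ (p - m) := intervalIntegral.integral_const_mul _ _

lemma exists_mul_rpow_le_gapIntegral (hτ : 0 ≤ τ) (hm : 0 < m) (hp : 0 ≤ p) (hR : 0 < R) :
    ∃ c > 0, ∃ ε₀ > 0, ∀ ε ∈ Ioo 0 ε₀,
      c * ε ^ ((p + 1) / m - 1) ≤ gapIntegral ε τ m R p :=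
  ⟨((p + 1) * (1 + τ))⁻¹, by positivity, R ^ m, Real.rpow_pos_of_pos hR m, fun ε hε => by
    simpa only [inv_mul_eq_div] using le_gapIntegral hε.1 hτ hm hp hR.le hε.2.le⟩

lemma exists_gapIntegral_le_rpow (hτ : 0 < τ) (hm : 0 < m) (hp : 0 ≤ p) (hR : 0 < R)
    (hpm : p + 1 < m) :
    ∃ K > 0, ∃ ε₀ > 0, ∀ ε ∈ Ioo 0 ε₀,
      gapIntegral ε τ m R p ≤ K * ε ^ ((p + 1) / m - 1) := by
  refine ⟨1 / (p + 1) + τ⁻¹ * (1 / (m - (p + 1))), by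
    have : 0 < m - (p + 1) := by linarith
    positivity, R ^ m, Real.rpow_pos_of_pos hR m, fun ε hε => ?_⟩
  have htail : ∫ s in ε ^ m⁻¹..R, s ^ (p - m) ≤ ε ^ ((p + 1) / m - 1) / (m - (p + 1)) := by
    have := integral_rpow_le_of_lt_neg_one (Real.rpow_pos_of_pos hε.1 m⁻¹)
      ((Real.rpow_inv_le_iff_of_pos hε.1.le hR.le hm).2 hε.2.le) (by linarith : p - m < -1)
    rwa [rpow_inv_rpow_eq_rpow_div hε.1.le,
      show (p - m + 1) / m = (p + 1) / m - 1 by field_simp; ring,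
      show -(p - m + 1) = m - (p + 1) by ring] at this
  calc gapIntegral ε τ m R p
      ≤ ε ^ ((p + 1) / m - 1) / (p + 1) + τ⁻¹ * ∫ s in ε ^ m⁻¹..R, s ^ (p - m) :=
        gapIntegral_le hε.1 hτ hm hp hR.le hε.2.le
    _ ≤ ε ^ ((p + 1) / m - 1) / (p + 1)
          + τ⁻¹ * (ε ^ ((p + 1) / m - 1) / (m - (p + 1))) := by
        gcongr
    _ = _ := by ring

lemma exists_gapIntegral_le_abs_log (hτ : 0 < τ) (hm : 0 < m) (hp : 0 ≤ p) (hR : 0 < R)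
    (hpm : p + 1 = m) :
    ∃ K > 0, ∃ ε₀ > 0, ∀ ε ∈ Ioo 0 ε₀,
      gapIntegral ε τ m R p ≤ K * |Real.log ε| := by
  refine ⟨1 / (p + 1) + τ⁻¹ * (|Real.log R| + 1 / m), by positivity,
    min (R ^ m) (Real.exp (-1)), lt_min (Real.rpow_pos_of_pos hR m) (Real.exp_pos _),
    fun ε hε => ?_⟩
  have hε' : ε ≤ R ^ m := hε.2.le.trans (min_le_left _ _)
  have hlog : Real.log ε ≤ -1 :=
    (Real.log_le_iff_le_exp hε.1).2 (hε.2.le.trans (min_le_right _ _))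
  have hL : -Real.log ε = |Real.log ε| := (abs_of_nonpos (by linarith)).symm
  have htail : ∫ s in ε ^ m⁻¹..R, s ^ (p - m) = Real.log R - Real.log ε / m := by
    have hδ := Real.rpow_pos_of_pos hε.1 m⁻¹
    rw [show p - m = -1 by linarith, intervalIntegral.integral_congr fun s _ => Real.rpow_neg_one s,
      integral_inv (notMem_uIcc_of_lt hδ hR), Real.log_div hR.ne' hδ.ne', Real.log_rpow hε.1]
    ring
  calc gapIntegral ε τ m R p
      ≤ ε ^ ((p + 1) / m - 1) / (p + 1) + τ⁻¹ * ∫ s in ε ^ m⁻¹..R, s ^ (p - m) :=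
        gapIntegral_le hε.1 hτ hm hp hR.le hε'
    _ = 1 / (p + 1) + τ⁻¹ * (Real.log R + |Real.log ε| / m) := by
        rw [htail, hpm, div_self hm.ne', sub_self, Real.rpow_zero, ← hL]
        ring
    _ ≤ 1 / (p + 1) * |Real.log ε|
          + τ⁻¹ * (|Real.log R| * |Real.log ε| + |Real.log ε| / m) := by
        have h1 : 1 ≤ |Real.log ε| := by linarith
        have h2 : Real.log R ≤ |Real.log R| * |Real.log ε| :=
          (le_abs_self _).trans (le_mul_of_one_le_right (abs_nonneg _) h1)
        gcongr
        exact le_mul_of_one_le_right (by positivity) h1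
    _ = _ := by ring

lemma exists_gapIntegral_le_const (hτ : 0 < τ) (hm : 0 < m) (hp : 0 ≤ p) (hR : 0 < R)
    (hpm : m < p + 1) :
    ∃ K > 0, ∃ ε₀ > 0, ∀ ε ∈ Ioo 0 ε₀, gapIntegral ε τ m R p ≤ K := by
  refine ⟨1 / (p + 1) + τ⁻¹ * (R ^ (p - m + 1) / (p - m + 1)), by
    have : 0 < p - m + 1 := by linarith
    have := Real.rpow_pos_of_pos hR (p - m + 1)
    positivity, min (R ^ m) 1, lt_min (Real.rpow_pos_of_pos hR m) one_pos, fun ε hε => ?_⟩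
  have hε1 : ε ≤ 1 := hε.2.le.trans (min_le_right _ _)
  have hpow : ε ^ ((p + 1) / m - 1) ≤ 1 :=
    Real.rpow_le_one hε.1.le hε1 (by rw [sub_nonneg, one_le_div hm]; exact hpm.le)
  calc gapIntegral ε τ m R p
      ≤ ε ^ ((p + 1) / m - 1) / (p + 1) + τ⁻¹ * ∫ s in ε ^ m⁻¹..R, s ^ (p - m) :=
        gapIntegral_le hε.1 hτ hm hp hR.le (hε.2.le.trans (min_le_left _ _))
    _ ≤ 1 / (p + 1) + τ⁻¹ * (R ^ (p - m + 1) / (p - m + 1)) := by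
        gcongr
        exact integral_rpow_le_of_neg_one_lt (Real.rpow_nonneg hε.1.le _) (by linarith)

end

theorem perturbation_ratio_bound_general (d : ℕ) (hd : 2 ≤ d) (m σ τ R : ℝ)
    (hσ : 0 < σ) (hτ : 0 < τ) (hR : 0 < R)
    (hmd : (d : ℝ) - 1 < m) :
    (((d : ℝ) - 1 + σ < m → ∃ C > 0, ∃ ε₀ > 0, ∀ ε ∈ Set.Ioo (0 : ℝ) ε₀,
      abs ((∫ s in Set.Ioo (0 : ℝ) R, s ^ ((d : ℝ) + σ - 2) / (ε + τ * s ^ m)) /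
           (∫ s in Set.Ioo (0 : ℝ) R, s ^ ((d : ℝ) - 2) / (ε + τ * s ^ m)))
        ≤ C * ε ^ (σ / m)) ∧
    (m = (d : ℝ) - 1 + σ → ∃ C > 0, ∃ ε₀ > 0, ∀ ε ∈ Set.Ioo (0 : ℝ) ε₀,
      abs ((∫ s in Set.Ioo (0 : ℝ) R, s ^ ((d : ℝ) + σ - 2) / (ε + τ * s ^ m)) /
           (∫ s in Set.Ioo (0 : ℝ) R, s ^ ((d : ℝ) - 2) / (ε + τ * s ^ m)))
        ≤ C * ε ^ (σ / m) * |Real.log ε|) ∧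
    (m < (d : ℝ) - 1 + σ → ∃ C > 0, ∃ ε₀ > 0, ∀ ε ∈ Set.Ioo (0 : ℝ) ε₀,
      abs ((∫ s in Set.Ioo (0 : ℝ) R, s ^ ((d : ℝ) + σ - 2) / (ε + τ * s ^ m)) /
           (∫ s in Set.Ioo (0 : ℝ) R, s ^ ((d : ℝ) - 2) / (ε + τ * s ^ m)))
        ≤ C * ε ^ (1 - ((d : ℝ) - 1) / m))) := by
  have hd' : (2 : ℝ) ≤ d := by exact_mod_cast hd
  have hm : 0 < m := by linarith
  have hp : (0 : ℝ) ≤ d - 2 := by linarith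
  have hq : (0 : ℝ) ≤ d + σ - 2 := by linarith
  have hD := exists_mul_rpow_le_gapIntegral hτ.le hm hp hR
  have hN0 : ∀ ε > (0 : ℝ), 0 ≤ gapIntegral ε τ m R (d + σ - 2) :=
    fun ε hε => gapIntegral_nonneg hε hτ.le
  have hh : ∀ ε > (0 : ℝ), 0 < ε ^ (((d : ℝ) - 2 + 1) / m - 1) :=
    fun ε hε => Real.rpow_pos_of_pos hε _
  refine ⟨fun hlt => ?_, fun heq => ?_, fun hgt => ?_⟩
  · refine exists_abs_div_le_mul (exists_gapIntegral_le_rpow hτ hm hq hR (by linarith))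
      hD hN0 hh fun ε hε => ?_
    rw [← Real.rpow_add hε]
    ring_nf
  · simp only [mul_assoc]
    refine exists_abs_div_le_mul (exists_gapIntegral_le_abs_log hτ hm hq hR (by linarith))
      hD hN0 hh fun ε hε => ?_
    rw [mul_right_comm, ← Real.rpow_add hε,
      show σ / m + ((d - 2 + 1) / m - 1) = 0 by field_simp; linarith, Real.rpow_zero, one_mul]
  · refine exists_abs_div_le_mul (N := fun ε => gapIntegral ε τ m R (d + σ - 2))
      (g := fun _ => 1)
      (by simpa only [mul_one] using exists_gapIntegral_le_const hτ hm hq hR (by linarith))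
      hD hN0 hh fun ε hε => ?_
    rw [← Real.rpow_add hε, show 1 - ((d : ℝ) - 1) / m + ((d - 2 + 1) / m - 1) = 0 by ring,
      Real.rpow_zero]

/-- Relative size of the perturbation term: for `m > d − 1`, the ratio
`(∫₀^R s^{d+σ−2}/(ε+τs^m) ds) / (∫₀^R s^{d−2}/(ε+τs^m) ds)` is `O(ε̂)` as `ε → 0⁺`,
where `ε̂ = ε^{σ/m}` if `m > d−1+σ`, `ε̂ = ε^{σ/m}|ln ε|` if `m = d−1+σ`, and
`ε̂ = ε^{1−(d−1)/m}` if `d−1 < m < d−1+σ`. -/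
theorem perturbation_ratio_bound (d : ℕ) (hd : 2 ≤ d) (m σ τ R : ℝ)
    (hm : 2 ≤ m) (hσ : 0 < σ) (hτ : 0 < τ) (hR : 0 < R)
    (hmd : (d : ℝ) - 1 < m) :
    (((d : ℝ) - 1 + σ < m → ∃ C > 0, ∃ ε₀ > 0, ∀ ε ∈ Set.Ioo (0 : ℝ) ε₀,
      abs ((∫ s in Set.Ioo (0 : ℝ) R, s ^ ((d : ℝ) + σ - 2) / (ε + τ * s ^ m)) /
           (∫ s in Set.Ioo (0 : ℝ) R, s ^ ((d : ℝ) - 2) / (ε + τ * s ^ m)))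
        ≤ C * ε ^ (σ / m)) ∧
    (m = (d : ℝ) - 1 + σ → ∃ C > 0, ∃ ε₀ > 0, ∀ ε ∈ Set.Ioo (0 : ℝ) ε₀,
      abs ((∫ s in Set.Ioo (0 : ℝ) R, s ^ ((d : ℝ) + σ - 2) / (ε + τ * s ^ m)) /
           (∫ s in Set.Ioo (0 : ℝ) R, s ^ ((d : ℝ) - 2) / (ε + τ * s ^ m)))
        ≤ C * ε ^ (σ / m) * |Real.log ε|) ∧
    (m < (d : ℝ) - 1 + σ → ∃ C > 0, ∃ ε₀ > 0, ∀ ε ∈ Set.Ioo (0 : ℝ) ε₀,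
      abs ((∫ s in Set.Ioo (0 : ℝ) R, s ^ ((d : ℝ) + σ - 2) / (ε + τ * s ^ m)) /
           (∫ s in Set.Ioo (0 : ℝ) R, s ^ ((d : ℝ) - 2) / (ε + τ * s ^ m)))
        ≤ C * ε ^ (1 - ((d : ℝ) - 1) / m))) :=
  perturbation_ratio_bound_general d hd m σ τ R hσ hτ hR hmd
end
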